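/- arXiv:2507.15689 — 4 statements merged into one kernel-verified Lean document; each statement's English description precedes it below -/
import Mathlib

section
/- Suppose for every function f mapping each concept C in a finite set C to one of its completions (a type containing C), the image f[C] has an ALC(Σ) separator Sep_f. Define Sep(C) as the disjunction over completions t of C of the conjunction over all f with f(C) = t of Sep_f(C). Then Sep is an ALC(Σ) separator for C: O ⊨ C ⊑ Sep(C) for all C ∈ C, and O ⊨ ⊓_{C∈C} Sep(C) ⊑ ⊥. -/
namespace DL

/-- ALCQ concepts over concept names `Cn` and role names `Rn`. -/
inductive Concept (Cn Rn : Type) : Type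
  | top : Concept Cn Rn
  | atom : Cn → Concept Cn Rn
  | neg : Concept Cn Rn → Concept Cn Rn
  | conj : Concept Cn Rn → Concept Cn Rn → Concept Cn Rn
  | atLeast : ℕ → Rn → Concept Cn Rn → Concept Cn Rn
  deriving DecidableEq

namespace Concept
variable {Cn Rn : Type}

/-- ∃r.C -/
def ex (r : Rn) (c : Concept Cn Rn) : Concept Cn Rn := atLeast 1 r c
/-- ∀r.C -/
def all (r : Rn) (c : Concept Cn Rn) : Concept Cn Rn := neg (atLeast 1 r (neg c))
def disj (c d : Concept Cn Rn) : Concept Cn Rn := neg (conj (neg c) (neg d))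
def impl (c d : Concept Cn Rn) : Concept Cn Rn := disj (neg c) d
def bot : Concept Cn Rn := neg top

/-- an ALC concept: all number restrictions are existential restrictions. -/
def isALC : Concept Cn Rn → Prop
  | top => True
  | atom _ => True
  | neg c => c.isALC
  | conj c d => c.isALC ∧ d.isALC
  | atLeast n _ c => n = 1 ∧ c.isALC

/-- size (number of symbols) of a concept. -/
def size : Concept Cn Rn → ℕ
  | top => 1
  | atom _ => 1
  | neg c => c.size + 1
  | conj c d => c.size + d.size + 1
  | atLeast n _ c => c.size + n + 2

/-- role depth of a concept. -/
def roleDepth : Concept Cn Rn → ℕ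
  | top => 0
  | atom _ => 0
  | neg c => c.roleDepth
  | conj c d => max c.roleDepth d.roleDepth
  | atLeast _ _ c => c.roleDepth + 1

end Concept

/-- big conjunction of a list of concepts -/
def bigConj {Cn Rn : Type} : List (Concept Cn Rn) → Concept Cn Rn
  | [] => Concept.top
  | c :: l => Concept.conj c (bigConj l)

/-- big disjunction of a list of concepts -/
def bigDisj {Cn Rn : Type} (l : List (Concept Cn Rn)) : Concept Cn Rn :=
  Concept.neg (bigConj (l.map Concept.neg))

/-- a signature: a set of concept names and a set of role names. -/
structure Sig (Cn Rn : Type) where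
  cs : Set Cn
  rs : Set Rn

/-- the concept uses only symbols from the signature σ. -/
def Concept.inSig {Cn Rn : Type} (σ : Sig Cn Rn) : Concept Cn Rn → Prop
  | .top => True
  | .atom A => A ∈ σ.cs
  | .neg c => c.inSig σ
  | .conj c d => c.inSig σ ∧ d.inSig σ
  | .atLeast _ r c => r ∈ σ.rs ∧ c.inSig σ

/-- an interpretation I = (Δ^I, ·^I). -/
structure Interp (Cn Rn : Type) : Type 1 where
  Dom : Type
  atomI : Cn → Set Dom
  roleI : Rn → Set (Dom × Dom)

/-- extension C^I of a concept in an interpretation. -/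
def Concept.sem {Cn Rn : Type} (I : Interp Cn Rn) : Concept Cn Rn → Set I.Dom
  | .top => Set.univ
  | .atom A => I.atomI A
  | .neg c => (c.sem I)ᶜ
  | .conj c d => c.sem I ∩ d.sem I
  | .atLeast n r c =>
      {x | ∃ s : Finset I.Dom, n ≤ s.card ∧ ∀ e ∈ s, (x, e) ∈ I.roleI r ∧ e ∈ c.sem I}

/-- an ontology: concept inclusions and role inclusions. -/
structure Ontology (Cn Rn : Type) where
  cis : Set (Concept Cn Rn × Concept Cn Rn)
  ris : Set (Rn × Rn)

def Interp.isModel {Cn Rn : Type} (I : Interp Cn Rn) (O : Ontology Cn Rn) : Prop :=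
  (∀ p ∈ O.cis, Concept.sem I p.1 ⊆ Concept.sem I p.2) ∧
  (∀ p ∈ O.ris, I.roleI p.1 ⊆ I.roleI p.2)

/-- O ⊨ c ⊑ d -/
def entails {Cn Rn : Type} (O : Ontology Cn Rn) (c d : Concept Cn Rn) : Prop :=
  ∀ I : Interp Cn Rn, I.isModel O → c.sem I ⊆ d.sem I

/-- O ⊨ r ⊑ s for role names -/
def roleEnt {Cn Rn : Type} (O : Ontology Cn Rn) (r s : Rn) : Prop :=
  ∀ I : Interp Cn Rn, I.isModel O → I.roleI r ⊆ I.roleI s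

/-- Z is a Σ-bisimulation between I and J. -/
def IsBisim {Cn Rn : Type} (σ : Sig Cn Rn) (I J : Interp Cn Rn)
    (Z : Set (I.Dom × J.Dom)) : Prop :=
  ∀ d e, (d, e) ∈ Z →
    (∀ A ∈ σ.cs, d ∈ I.atomI A ↔ e ∈ J.atomI A) ∧
    (∀ r ∈ σ.rs, ∀ d', (d, d') ∈ I.roleI r → ∃ e', (e, e') ∈ J.roleI r ∧ (d', e') ∈ Z) ∧
    (∀ r ∈ σ.rs, ∀ e', (e, e') ∈ J.roleI r → ∃ d', (d, d') ∈ I.roleI r ∧ (d', e') ∈ Z)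

/-- pointed interpretations are Σ-bisimilar. -/
def Bisimilar {Cn Rn : Type} (σ : Sig Cn Rn) (I : Interp Cn Rn) (d : I.Dom)
    (J : Interp Cn Rn) (e : J.Dom) : Prop :=
  ∃ Z, IsBisim σ I J Z ∧ (d, e) ∈ Z

/-- E is an ALC(Σ) interpolant for O ⊨ c ⊑ d. -/
def IsInterpolant {Cn Rn : Type} (O : Ontology Cn Rn) (σ : Sig Cn Rn)
    (c d E : Concept Cn Rn) : Prop :=
  E.isALC ∧ E.inSig σ ∧ entails O c E ∧ entails O E d

/-- c and d are jointly ∼_{ALC,Σ}-consistent under O. -/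
def JointlyConsistent {Cn Rn : Type} (O : Ontology Cn Rn) (σ : Sig Cn Rn)
    (c d : Concept Cn Rn) : Prop :=
  ∃ (I₁ I₂ : Interp Cn Rn) (d₁ : I₁.Dom) (d₂ : I₂.Dom),
    I₁.isModel O ∧ I₂.isModel O ∧ d₁ ∈ c.sem I₁ ∧ d₂ ∈ d.sem I₂ ∧ Bisimilar σ I₁ d₁ I₂ d₂

/-- semantics of a set of concepts viewed as conjunction. -/
def setSem {Cn Rn : Type} (I : Interp Cn Rn) (t : Set (Concept Cn Rn)) : Set I.Dom :=
  {x | ∀ c ∈ t, x ∈ c.sem I}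

/-- the type of an element: concepts from sub true at x. -/
def tpSet {Cn Rn : Type} (I : Interp Cn Rn) (sub : Set (Concept Cn Rn)) (x : I.Dom) :
    Set (Concept Cn Rn) :=
  {c | c ∈ sub ∧ x ∈ c.sem I}

/-- t is a type for O (realizable subset of sub). -/
def IsTypeFor {Cn Rn : Type} (O : Ontology Cn Rn) (sub : Set (Concept Cn Rn))
    (t : Set (Concept Cn Rn)) : Prop :=
  ∃ (I : Interp Cn Rn) (x : I.Dom), I.isModel O ∧ t = tpSet I sub x

/-- t_{/r} = {C : ∀r.C ∈ t} -/
def slash {Cn Rn : Type} (t : Set (Concept Cn Rn)) (r : Rn) : Set (Concept Cn Rn) :=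
  {c | Concept.all r c ∈ t}

/-- t ⤳_r t' -/
def typeStep {Cn Rn : Type} (r : Rn) (t t' : Set (Concept Cn Rn)) : Prop :=
  slash t r ⊆ t'

/-- T ⤳_s T' for mosaics -/
def mosaicStep {Cn Rn : Type} (s : Rn) (T T' : Set (Set (Concept Cn Rn))) : Prop :=
  ∀ t ∈ T, ∃ t' ∈ T', typeStep s t t'

/-- O ⊨ t ⊑ D for a type t viewed as conjunction. -/
def entailsSet {Cn Rn : Type} (O : Ontology Cn Rn) (t : Set (Concept Cn Rn))
    (D : Concept Cn Rn) : Prop :=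
  ∀ I : Interp Cn Rn, I.isModel O → setSem I t ⊆ D.sem I

/-- iterated exponential -/
def Tower : ℕ → ℕ
  | 0 => 1
  | n + 1 => 2 ^ Tower n

/-- t is realizable under O (viewed as a conjunction). -/
def RealizableF {Cn Rn : Type} (O : Ontology Cn Rn) (t : Finset (Concept Cn Rn)) : Prop :=
  ∃ (I : Interp Cn Rn) (x : I.Dom), I.isModel O ∧ ∀ c ∈ t, x ∈ c.sem I

open Classical in
/-- the completions of c: realizable subsets of sub containing c. -/
noncomputable def completionsF {Cn Rn : Type} [DecidableEq Cn] [DecidableEq Rn]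
    (O : Ontology Cn Rn) (sub : Finset (Concept Cn Rn)) (c : Concept Cn Rn) :
    Finset (Finset (Concept Cn Rn)) :=
  sub.powerset.filter (fun t => c ∈ t ∧ RealizableF O t)

/-- functions from 𝒞 to subsets of sub (candidate completion choices). -/
abbrev CpFun {Cn Rn : Type} [DecidableEq Cn] [DecidableEq Rn]
    (𝒞 sub : Finset (Concept Cn Rn)) : Type :=
  {c // c ∈ 𝒞} → {t // t ∈ sub.powerset}

open Classical in
/-- cp(𝒞): functions mapping each c ∈ 𝒞 to one of its completions. -/
noncomputable def cpSet {Cn Rn : Type} [DecidableEq Cn] [DecidableEq Rn]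
    (O : Ontology Cn Rn) (𝒞 sub : Finset (Concept Cn Rn)) : Finset (CpFun 𝒞 sub) :=
  Finset.univ.filter (fun f => ∀ c : {c // c ∈ 𝒞}, (f c).1 ∈ completionsF O sub c.1)

open Classical in
/-- Sep(C): disjunction over completions t of C of the conjunction over all f ∈ cp(𝒞)
with f(C) = t of Sep_f(C). -/
noncomputable def sepComb {Cn Rn : Type} [DecidableEq Cn] [DecidableEq Rn]
    (O : Ontology Cn Rn) (𝒞 sub : Finset (Concept Cn Rn))
    (Sepf : CpFun 𝒞 sub → Concept Cn Rn → Concept Cn Rn)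
    (c : {c // c ∈ 𝒞}) : Concept Cn Rn :=
  bigDisj ((completionsF O sub c.1).toList.map (fun t =>
    bigConj (((cpSet O 𝒞 sub).filter (fun f => (f c).1 = t)).toList.map
      (fun f => Sepf f c.1))))

/-! An element `x` of `C` satisfies its own type in `sub`, which is a completion `t` of `C`, and
hence every `Sep_f(C)` with `f(C) = t`: so `x` lies in the disjunct of `Sep(C)` indexed by `t`.
Conversely, an element satisfying every `Sep(C)` selects for each `C` a completion whose disjunct
it satisfies; these choices form one `f ∈ cp(𝒞)` with `x ∈ Sep_f(C)` for all `C`, which is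
impossible as `Sep_f` is a separator. -/

section Connectives

variable {Cn Rn : Type}

theorem mem_sem_bigConj (I : Interp Cn Rn) (l : List (Concept Cn Rn)) (x : I.Dom) :
    x ∈ (bigConj l).sem I ↔ ∀ c ∈ l, x ∈ c.sem I := by
  induction l with
  | nil => simp [bigConj, Concept.sem]
  | cons c l ih => simp [bigConj, Concept.sem, ih]

theorem mem_sem_bigDisj (I : Interp Cn Rn) (l : List (Concept Cn Rn)) (x : I.Dom) :
    x ∈ (bigDisj l).sem I ↔ ∃ c ∈ l, x ∈ c.sem I := by
  simp [bigDisj, Concept.sem, mem_sem_bigConj]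

theorem isALC_bigConj {l : List (Concept Cn Rn)} (h : ∀ c ∈ l, c.isALC) :
    (bigConj l).isALC := by
  induction l with
  | nil => trivial
  | cons c l ih => exact ⟨h c List.mem_cons_self, ih fun d hd => h d (List.mem_cons_of_mem _ hd)⟩

theorem isALC_bigDisj {l : List (Concept Cn Rn)} (h : ∀ c ∈ l, c.isALC) :
    (bigDisj l).isALC :=
  isALC_bigConj <| by simpa [Concept.isALC] using h

theorem inSig_bigConj {σ : Sig Cn Rn} {l : List (Concept Cn Rn)} (h : ∀ c ∈ l, c.inSig σ) :
    (bigConj l).inSig σ := by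
  induction l with
  | nil => trivial
  | cons c l ih => exact ⟨h c List.mem_cons_self, ih fun d hd => h d (List.mem_cons_of_mem _ hd)⟩

theorem inSig_bigDisj {σ : Sig Cn Rn} {l : List (Concept Cn Rn)} (h : ∀ c ∈ l, c.inSig σ) :
    (bigDisj l).inSig σ :=
  inSig_bigConj <| by simpa [Concept.inSig] using h

end Connectives

section Completions

variable {Cn Rn : Type} [DecidableEq Cn] [DecidableEq Rn] {O : Ontology Cn Rn}
  {𝒞 sub : Finset (Concept Cn Rn)}

open Classical in
theorem filter_mem_sem_mem_completionsF {I : Interp Cn Rn} (hI : I.isModel O) {x : I.Dom}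
    {c : Concept Cn Rn} (hc : c ∈ sub) (hx : x ∈ c.sem I) :
    sub.filter (fun d => x ∈ d.sem I) ∈ completionsF O sub c := by
  simp only [completionsF, Finset.mem_filter, Finset.mem_powerset]
  exact ⟨Finset.filter_subset _ _, ⟨hc, hx⟩, I, x, hI, fun d hd => (Finset.mem_filter.mp hd).2⟩

theorem exists_mem_cpSet_of_mem_completionsF {t : {c // c ∈ 𝒞} → Finset (Concept Cn Rn)}
    (ht : ∀ c, t c ∈ completionsF O sub c.1) : ∃ f ∈ cpSet O 𝒞 sub, ∀ c, (f c).1 = t c := by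
  have hsub c : t c ∈ sub.powerset := by
    have := ht c
    simp only [completionsF, Finset.mem_filter] at this
    exact this.1
  exact ⟨fun c => ⟨t c, hsub c⟩, by simpa [cpSet] using ht, fun _ => rfl⟩

variable {Sepf : CpFun 𝒞 sub → Concept Cn Rn → Concept Cn Rn}

theorem mem_sem_sepComb (I : Interp Cn Rn) (c : {c // c ∈ 𝒞}) (x : I.Dom) :
    x ∈ (sepComb O 𝒞 sub Sepf c).sem I ↔
      ∃ t ∈ completionsF O sub c.1, ∀ f ∈ cpSet O 𝒞 sub, (f c).1 = t → x ∈ (Sepf f c.1).sem I := by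
  simp only [sepComb, mem_sem_bigDisj, List.mem_map, exists_exists_and_eq_and, Finset.mem_toList,
    mem_sem_bigConj, Finset.mem_filter, forall_exists_index, and_imp, forall_comm (α := Concept Cn Rn),
    forall_eq']

theorem isALC_sepComb {c : {c // c ∈ 𝒞}} (h : ∀ f ∈ cpSet O 𝒞 sub, (Sepf f c.1).isALC) :
    (sepComb O 𝒞 sub Sepf c).isALC :=
  isALC_bigDisj <| List.forall_mem_map.2 fun _ _ => isALC_bigConj <|
    List.forall_mem_map.2 fun f hf => h f (Finset.mem_filter.1 (Finset.mem_toList.1 hf)).1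

theorem inSig_sepComb {σ : Sig Cn Rn} {c : {c // c ∈ 𝒞}}
    (h : ∀ f ∈ cpSet O 𝒞 sub, (Sepf f c.1).inSig σ) : (sepComb O 𝒞 sub Sepf c).inSig σ :=
  inSig_bigDisj <| List.forall_mem_map.2 fun _ _ => inSig_bigConj <|
    List.forall_mem_map.2 fun f hf => h f (Finset.mem_filter.1 (Finset.mem_toList.1 hf)).1

end Completions

/-- Hard direction of the completion lemma: if every cp-image has an ALC(Σ) separator,
then the combination sepComb is an ALC(Σ) separator for 𝒞. -/
theorem completion_lemma_hard {Cn Rn : Type} [DecidableEq Cn] [DecidableEq Rn]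
    (O : Ontology Cn Rn) (σ : Sig Cn Rn)
    (𝒞 sub : Finset (Concept Cn Rn)) (h𝒞 : 𝒞 ⊆ sub)
    (Sepf : CpFun 𝒞 sub → Concept Cn Rn → Concept Cn Rn)
    (hALC : ∀ f ∈ cpSet O 𝒞 sub, ∀ c ∈ 𝒞, (Sepf f c).isALC ∧ (Sepf f c).inSig σ)
    (hSep1 : ∀ f ∈ cpSet O 𝒞 sub, ∀ c : {c // c ∈ 𝒞}, ∀ I : Interp Cn Rn,
      I.isModel O → setSem I (↑(f c).1 : Set (Concept Cn Rn)) ⊆ (Sepf f c.1).sem I)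
    (hSep2 : ∀ f ∈ cpSet O 𝒞 sub, ∀ I : Interp Cn Rn, I.isModel O →
      {x : I.Dom | ∀ c : {c // c ∈ 𝒞}, x ∈ (Sepf f c.1).sem I} = ∅) :
    (∀ c : {c // c ∈ 𝒞},
      (sepComb O 𝒞 sub Sepf c).isALC ∧ (sepComb O 𝒞 sub Sepf c).inSig σ ∧
      entails O c.1 (sepComb O 𝒞 sub Sepf c)) ∧
    (∀ I : Interp Cn Rn, I.isModel O →
      {x : I.Dom | ∀ c : {c // c ∈ 𝒞}, x ∈ (sepComb O 𝒞 sub Sepf c).sem I} = ∅) := by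
  refine ⟨fun c => ⟨isALC_sepComb fun f hf => (hALC f hf c.1 c.2).1,
    inSig_sepComb fun f hf => (hALC f hf c.1 c.2).2, ?_⟩, ?_⟩
  · classical
    intro I hI x hx
    refine (mem_sem_sepComb I c x).mpr ⟨_, filter_mem_sem_mem_completionsF hI (h𝒞 c.2) hx, ?_⟩
    rintro f hf hft
    exact hSep1 f hf c I hI <| by
      rw [hft]
      exact fun d hd => (Finset.mem_filter.mp hd).2
  · intro I hI
    refine Set.eq_empty_of_forall_notMem fun x hx => ?_
    choose t ht hxt using fun c => (mem_sem_sepComb I c x).mp (hx c)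
    obtain ⟨f, hf, hft⟩ := exists_mem_cpSet_of_mem_completionsF ht
    exact Set.eq_empty_iff_forall_notMem.mp (hSep2 f hf I hI) x fun c => hxt c f hf (hft c)

end DL
end

section
/- Let O = {r ⊑ s, r ⊑ s'}, C₀ = ∃r.⊤, and Σ = {s, s'}. Then for every ALC(Σ) concept C, O ⊨ C₀ ⊑ (∀s.C → ∃s'.C). -/
namespace DL

/-- the ontology {r ⊑ s, r ⊑ s'} with r = 0, s = 1, s' = 2. -/
def O11 : Ontology ℕ (Fin 3) := ⟨∅, {(0, 1), (0, 2)}⟩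

/-- the signature Σ = {s, s'}. -/
def σ11 : Sig ℕ (Fin 3) := ⟨∅, {1, 2}⟩

/-- For every ALC(Σ) concept C: O ⊨ ∃r.⊤ ⊑ (∀s.C → ∃s'.C). -/
theorem key_consequence_family (C : Concept ℕ (Fin 3))
    (hALC : C.isALC) (hSig : C.inSig σ11) :
    entails O11 (Concept.ex 0 Concept.top)
      (Concept.impl (Concept.all 1 C) (Concept.ex 2 C)) := by
  intro I hI x hx
  -- extract an r-successor y of x
  obtain ⟨s, hs, hmem⟩ := hx
  obtain ⟨y, hy⟩ := Finset.card_pos.mp (lt_of_lt_of_le Nat.one_pos hs)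
  have hr : (x, y) ∈ I.roleI 0 := (hmem y hy).1
  have hs1 : (x, y) ∈ I.roleI 1 := hI.2 (0, 1) (by simp [O11]) hr
  have hs2 : (x, y) ∈ I.roleI 2 := hI.2 (0, 2) (by simp [O11]) hr
  -- goal: x ∈ (¬(¬¬(∀s.C) ⊓ ¬(∃s'.C)))^I
  intro hcon
  rcases hcon with ⟨hall, hnex⟩
  -- hall : x ∈ ((neg (all 1 C)) ^I)ᶜ, i.e. x ∈ (all 1 C)^I
  have hxall : x ∈ (Concept.all 1 C).sem I := by
    have := Set.not_notMem.mp hall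
    exact this
  -- then y ∈ C^I
  have hyC : y ∈ C.sem I := by
    by_contra hyC
    exact hxall ⟨{y}, by simp, by intro e he; simp at he; subst he; exact ⟨hs1, hyC⟩⟩
  -- so x ∈ (∃s'.C)^I, contradicting hnex
  exact hnex ⟨{y}, by simp, by intro e he; simp at he; subst he; exact ⟨hs2, hyC⟩⟩
end DL
end

section
/- Given Σ-bisimilar pointed models I₁,d₁ and I₂,d₂ of an ALCH ontology O with d₁ ∈ C₀^{I₁} and d₂ ∈ D₀^{I₂}, and assuming without loss of generality I₁ = I₂ = I (via disjoint union), the set M* = { {tp_I(e) : I,d ∼_{ALC,Σ} I,e} : d ∈ Δ^I } is a set of mosaics containing no bad mosaic, and it contains a mosaic T with types t₁ ∋ C₀ and t₂ ∋ D₀. -/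
namespace DL

/-- sub is closed under subconcepts and single negation. -/
def SubClosed {Cn Rn : Type} (sub : Set (Concept Cn Rn)) : Prop :=
  (∀ c : Concept Cn Rn, Concept.neg c ∈ sub → c ∈ sub) ∧
  (∀ c d : Concept Cn Rn, Concept.conj c d ∈ sub → c ∈ sub ∧ d ∈ sub) ∧
  (∀ (n : ℕ) (r : Rn) (c : Concept Cn Rn), Concept.atLeast n r c ∈ sub → c ∈ sub) ∧
  (∀ c ∈ sub, Concept.neg c ∈ sub ∨ ∃ d ∈ sub, c = Concept.neg d)

/-- atomic consistency: all types of the mosaic agree on Σ-concept names. -/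
def AtomConsistent {Cn Rn : Type} (σ : Sig Cn Rn) (T : Set (Set (Concept Cn Rn))) : Prop :=
  ∀ t ∈ T, ∀ t' ∈ T, ∀ A ∈ σ.cs, (Concept.atom A ∈ t ↔ Concept.atom A ∈ t')

/-- existential saturation of a mosaic T relative to a set M of mosaics. -/
def ExSaturated {Cn Rn : Type} (O : Ontology Cn Rn) (σ : Sig Cn Rn)
    (M : Set (Set (Set (Concept Cn Rn)))) (T : Set (Set (Concept Cn Rn))) : Prop :=
  ∀ t ∈ T, ∀ (r : Rn) (c : Concept Cn Rn), Concept.ex r c ∈ t →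
    ∃ T' ∈ M, (∃ t' ∈ T', c ∈ t' ∧ typeStep r t t') ∧
      ∀ s ∈ σ.rs, roleEnt O r s → mosaicStep s T T'

/-- domain of the mosaic model: pairs (t,T) with T ∈ M and t ∈ T. -/
def MosDom {Cn Rn : Type} (M : Set (Set (Set (Concept Cn Rn)))) : Type :=
  {p : Set (Concept Cn Rn) × Set (Set (Concept Cn Rn)) // p.2 ∈ M ∧ p.1 ∈ p.2}

/-- the interpretation built from a set of mosaics. -/
def mosInterp {Cn Rn : Type} (O : Ontology Cn Rn) (σ : Sig Cn Rn)
    (M : Set (Set (Set (Concept Cn Rn)))) : Interp Cn Rn where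
  Dom := MosDom M
  atomI A := {x | Concept.atom A ∈ x.1.1}
  roleI r := {p | typeStep r p.1.1.1 p.2.1.1 ∧
    ∀ s ∈ σ.rs, roleEnt O r s → mosaicStep s p.1.1.2 p.2.1.2}


section Aux
variable {Cn Rn : Type}

lemma bisim_refl (σ : Sig Cn Rn) (I : Interp Cn Rn) (d : I.Dom) :
    Bisimilar σ I d I d := by
  refine ⟨{p | p.1 = p.2}, ?_, rfl⟩
  intro a b hab
  simp only [Set.mem_setOf_eq] at hab
  subst hab
  exact ⟨fun _ _ => Iff.rfl, fun r _ d' h => ⟨d', h, rfl⟩, fun r _ e' h => ⟨e', h, rfl⟩⟩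

lemma bisim_symm {σ : Sig Cn Rn} {I : Interp Cn Rn} {d e : I.Dom}
    (h : Bisimilar σ I d I e) : Bisimilar σ I e I d := by
  obtain ⟨Z, hZ, hde⟩ := h
  refine ⟨{p | (p.2, p.1) ∈ Z}, ?_, hde⟩
  intro a b hab
  obtain ⟨h1, h2, h3⟩ := hZ b a hab
  exact ⟨fun A hA => (h1 A hA).symm,
    fun r hr d' hd' => (h3 r hr d' hd').imp fun e' ⟨h4, h5⟩ => ⟨h4, h5⟩,
    fun r hr e' he' => (h2 r hr e' he').imp fun d' ⟨h4, h5⟩ => ⟨h4, h5⟩⟩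

lemma bisim_trans {σ : Sig Cn Rn} {I : Interp Cn Rn} {d e f : I.Dom}
    (h1 : Bisimilar σ I d I e) (h2 : Bisimilar σ I e I f) : Bisimilar σ I d I f := by
  obtain ⟨Z1, hZ1, hde⟩ := h1
  obtain ⟨Z2, hZ2, hef⟩ := h2
  refine ⟨{p | ∃ z, (p.1, z) ∈ Z1 ∧ (z, p.2) ∈ Z2}, ?_, ⟨e, hde, hef⟩⟩
  rintro a b ⟨z, haz, hzb⟩
  obtain ⟨a1, a2, a3⟩ := hZ1 a z haz
  obtain ⟨b1, b2, b3⟩ := hZ2 z b hzb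
  refine ⟨fun A hA => (a1 A hA).trans (b1 A hA), ?_, ?_⟩
  · intro r hr d' hd'
    obtain ⟨z', hz', hz2⟩ := a2 r hr d' hd'
    obtain ⟨e', he', he2⟩ := b2 r hr z' hz'
    exact ⟨e', he', z', hz2, he2⟩
  · intro r hr e' he'
    obtain ⟨z', hz', hz2⟩ := b3 r hr e' he'
    obtain ⟨d', hd', hd2⟩ := a3 r hr z' hz'
    exact ⟨d', hd', z', hd2, hz2⟩

lemma typeStep_of_role {sub : Set (Concept Cn Rn)} (hclosed : SubClosed sub)
    {I : Interp Cn Rn} {s : Rn} {x y : I.Dom} (hxy : (x, y) ∈ I.roleI s) :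
    typeStep s (tpSet I sub x) (tpSet I sub y) := by
  intro c hc
  obtain ⟨hmem, hsem⟩ := hc
  have h1 : Concept.atLeast 1 s (Concept.neg c) ∈ sub := hclosed.1 _ hmem
  have h2 : Concept.neg c ∈ sub := hclosed.2.2.1 _ _ _ h1
  refine ⟨hclosed.1 _ h2, ?_⟩
  by_contra hy
  apply hsem
  simp only [Concept.all, Concept.sem, Set.mem_setOf_eq]
  refine ⟨{y}, by simp, ?_⟩
  intro f hf
  simp only [Finset.mem_singleton] at hf
  subst hf
  exact ⟨hxy, hy⟩

end Aux

/-- ⇒ direction of Lemma 4: from Σ-bisimilar points of a model of O satisfying C₀ and D₀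
(wlog in the same model I), the set of mosaics read off from I contains no bad mosaic and
contains a mosaic with types for C₀ and D₀. -/
theorem mosaics_from_model {Cn Rn : Type} (O : Ontology Cn Rn) (σ : Sig Cn Rn)
    (sub : Set (Concept Cn Rn)) (C₀ D₀ : Concept Cn Rn)
    (hOalc : ∀ p ∈ O.cis, (p.1).isALC ∧ (p.2).isALC)
    (hOsub : ∀ p ∈ O.cis, p.1 ∈ sub ∧ p.2 ∈ sub)
    (hclosed : SubClosed sub) (hC₀ : C₀ ∈ sub) (hD₀ : D₀ ∈ sub)
    (I : Interp Cn Rn) (hI : I.isModel O) (d₁ d₂ : I.Dom)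
    (hd₁ : d₁ ∈ C₀.sem I) (hd₂ : d₂ ∈ D₀.sem I) (hbis : Bisimilar σ I d₁ I d₂) :
    let M : Set (Set (Set (Concept Cn Rn))) :=
      {T | ∃ d : I.Dom, T = {t | ∃ e : I.Dom, Bisimilar σ I d I e ∧ t = tpSet I sub e}}
    (∀ T ∈ M, ∀ t ∈ T, IsTypeFor O sub t) ∧
    (∀ T ∈ M, AtomConsistent σ T) ∧
    (∀ T ∈ M, ExSaturated O σ M T) ∧
    (∃ T ∈ M, ∃ t₁ ∈ T, ∃ t₂ ∈ T, C₀ ∈ t₁ ∧ D₀ ∈ t₂) := by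
  intro M
  have hM1 : ∀ T ∈ M, ∀ t ∈ T, IsTypeFor O sub t := by
    rintro T ⟨d, rfl⟩ t ⟨e, hbe, rfl⟩
    exact ⟨I, e, hI, rfl⟩
  have hM2 : ∀ T ∈ M, AtomConsistent σ T := by
    rintro T ⟨d, rfl⟩ t ⟨e, ⟨Z, hZ, hde⟩, rfl⟩ t' ⟨e', ⟨Z', hZ', hde'⟩, rfl⟩ A hA
    have h1 := (hZ d e hde).1 A hA
    have h2 := (hZ' d e' hde').1 A hA
    constructor
    · rintro ⟨hs, hsem⟩
      exact ⟨hs, h2.1 (h1.2 hsem)⟩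
    · rintro ⟨hs, hsem⟩
      exact ⟨hs, h1.1 (h2.2 hsem)⟩
  refine ⟨hM1, hM2, ?_, ?_⟩
  · rintro T ⟨d, rfl⟩ t ⟨e, hbe, rfl⟩ r c ⟨hcsub, hsem⟩
    simp only [Concept.ex, Concept.sem, Set.mem_setOf_eq] at hsem
    obtain ⟨s, hcard, hs⟩ := hsem
    obtain ⟨e', he's⟩ := Finset.card_pos.mp hcard
    obtain ⟨hee', hce'⟩ := hs e' he's
    refine ⟨{t | ∃ g : I.Dom, Bisimilar σ I e' I g ∧ t = tpSet I sub g}, ⟨e', rfl⟩, ?_, ?_⟩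
    · refine ⟨tpSet I sub e', ⟨e', bisim_refl σ I e', rfl⟩, ?_, typeStep_of_role hclosed hee'⟩
      exact ⟨hclosed.2.2.1 _ _ _ hcsub, hce'⟩
    · intro s' hs' hrs
      rintro t₁ ⟨f, hbf, rfl⟩
      have hee'' : (e, e') ∈ I.roleI s' := hrs I hI hee'
      obtain ⟨Z, hZ, hfe⟩ := bisim_trans (bisim_symm hbf) hbe
      obtain ⟨f', hff', hf'e'⟩ := (hZ f e hfe).2.2 s' hs' e' hee''
      exact ⟨tpSet I sub f', ⟨f', bisim_symm ⟨Z, hZ, hf'e'⟩, rfl⟩,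
        typeStep_of_role hclosed hff'⟩
  · refine ⟨{t | ∃ e : I.Dom, Bisimilar σ I d₁ I e ∧ t = tpSet I sub e}, ⟨d₁, rfl⟩,
      tpSet I sub d₁, ⟨d₁, bisim_refl σ I d₁, rfl⟩,
      tpSet I sub d₂, ⟨d₂, hbis, rfl⟩, ⟨hC₀, hd₁⟩, ⟨hD₀, hd₂⟩⟩

end DL
end

section
/- Let Sep_D be an ALC(Σ) separator for a set D of concepts under ontology O, and let t be a type with O ⊨ t ⊑ ∃r.(⊓(D₀)) for some distinguished D₀ ∈ D via an r-successor, and suppose O ⊨ t ⊑ ∀s.(⊓ t_{/s}) and O ⊨ t_{/s} ⊑ Sep_D(t_{/s}) for each s ∈ Σ with O ⊨ r ⊑ s and t_{/s} ∈ D. Then O ⊨ t ⊑ ⊔_{t'≠t} ⊔_{O ⊨ r⊑s, s∈Σ} ∃s.¬Sep_D(t'_{/s}), where t' ranges over the other types of the mosaic T being eliminated and D = {t'_{/s} : t' ∈ T, s ∈ Σ, O ⊨ r ⊑ s} ∪ {{C} ∪ t_{/r}}. -/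
namespace DL

/-- Inductive step for ALCH: from a separator Sep for the set 𝒟 of "pushed" types,
every element satisfying t has, for some other type t' of T and some s ∈ Σ with
O ⊨ r ⊑ s, an s-successor falsifying Sep(t'_{/s}). -/
theorem inductive_step_entailment {Cn Rn : Type} (O : Ontology Cn Rn) (σ : Sig Cn Rn)
    (T : Set (Set (Concept Cn Rn))) (t : Set (Concept Cn Rn)) (ht : t ∈ T)
    (r : Rn) (C : Concept Cn Rn) (hex : Concept.ex r C ∈ t)
    (𝒟 : Set (Set (Concept Cn Rn)))
    (h𝒟 : 𝒟 = {X | ∃ t' ∈ T, ∃ s ∈ σ.rs, roleEnt O r s ∧ X = slash t' s} ∪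
      {insert C (slash t r)})
    (Sep : Set (Concept Cn Rn) → Concept Cn Rn)
    (hSep1 : ∀ X ∈ 𝒟, entailsSet O X (Sep X))
    (hSep2 : ∀ I : Interp Cn Rn, I.isModel O →
      {x : I.Dom | ∀ X ∈ 𝒟, x ∈ (Sep X).sem I} = ∅)
    (hwit : ∀ I : Interp Cn Rn, I.isModel O → ∀ x ∈ setSem I t,
      ∃ y : I.Dom, (x, y) ∈ I.roleI r ∧ y ∈ setSem I (insert C (slash t r)))
    (hall : ∀ s ∈ σ.rs, roleEnt O r s → ∀ I : Interp Cn Rn, I.isModel O →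
      ∀ x ∈ setSem I t, ∀ y : I.Dom, (x, y) ∈ I.roleI s → y ∈ setSem I (slash t s))
    (hts : ∀ s ∈ σ.rs, roleEnt O r s →
      slash t s ∈ 𝒟 ∧ entailsSet O (slash t s) (Sep (slash t s))) :
    ∀ I : Interp Cn Rn, I.isModel O → ∀ x ∈ setSem I t,
      ∃ t' ∈ T, t' ≠ t ∧ ∃ s ∈ σ.rs, roleEnt O r s ∧
        ∃ y : I.Dom, (x, y) ∈ I.roleI s ∧ y ∉ (Sep (slash t' s)).sem I := by
  intro I hI x hx
  obtain ⟨y, hxy, hy⟩ := hwit I hI x hx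
  -- some X ∈ 𝒟 fails at y
  have hne : ¬ ∀ X ∈ 𝒟, y ∈ (Sep X).sem I := by
    intro h
    have := hSep2 I hI
    have : y ∈ ({x : I.Dom | ∀ X ∈ 𝒟, x ∈ (Sep X).sem I} : Set I.Dom) := h
    rw [hSep2 I hI] at this
    exact this
  push_neg at hne
  obtain ⟨X, hX, hyX⟩ := hne
  rw [h𝒟] at hX
  cases hX with
  | inr hX =>
    -- X = insert C (slash t r): contradiction, y satisfies it
    have hXD : X ∈ 𝒟 := by rw [h𝒟]; exact Or.inr hX
    rcases hX with hX
    exact absurd (hSep1 X hXD I hI (hX ▸ hy)) hyX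
  | inl hX =>
    obtain ⟨t', ht', s, hs, hrs, hXeq⟩ := hX
    by_cases htt : t' = t
    · exfalso
      subst htt
      have hys : (x, y) ∈ I.roleI s := hrs I hI hxy
      have hyslash : y ∈ setSem I (slash t' s) := hall s hs hrs I hI x hx y hys
      exact hyX (hXeq ▸ (hts s hs hrs).2 I hI hyslash)
    · exact ⟨t', ht', htt, s, hs, hrs, y, hrs I hI hxy, hXeq ▸ hyX⟩
end DL
end
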